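/- arXiv:1902.02920 — 3 statements merged into one kernel-verified Lean document; each statement's English description precedes it below -/
import Mathlib

section
/- For every x, μ ∈ ℝ^d, every positive definite d×d matrix Σ, and all indices t1, …, t6 ∈ {1,…,d}, writing s_{ij} := (Σ^{-1})_{ij} and z_i := (Σ^{-1}(x−μ))_i, the sixth-order mean derivatives of the d-variate normal density satisfy ∂⁶f(x;μ,Σ)/∂μ_{t1}∂μ_{t2}∂μ_{t3}∂μ_{t4}∂μ_{t5}∂μ_{t6} = ( −Σ_{{a,b},{c,e},{g,h}} s_{t_a t_b} s_{t_c t_e} s_{t_g t_h} + Σ_{{a,b},{c,e},{g},{h}} s_{t_a t_b} s_{t_c t_e} z_{t_g} z_{t_h} − Σ_{{a,b},{c,e,g,h}} s_{t_a t_b} z_{t_c} z_{t_e} z_{t_g} z_{t_h} + z_{t1} z_{t2} z_{t3} z_{t4} z_{t5} z_{t6} ) · f(x;μ,Σ), where the first sum ranges over the 15 partitions of {1,…,6} into three unordered pairs, the second sum over the 45 partitions of {1,…,6} into two unordered pairs and two singletons, and the third sum over the 15 partitions of {1,…,6} into one unordered pair {a,b} and one four-element set {c,e,g,h}. -/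
open Real Matrix

noncomputable section

def pd {ι : Type*} [Fintype ι] [DecidableEq ι] (i : ι) (F : (ι → ℝ) → ℝ) :
    (ι → ℝ) → ℝ :=
  fun a => fderiv ℝ F a (Pi.single i 1)

def normpdf (d : ℕ) (x μ : Fin d → ℝ) (S : Matrix (Fin d) (Fin d) ℝ) : ℝ :=
  (2 * π) ^ (-(d : ℝ) / 2) * S.det ^ (-(1 : ℝ) / 2) *
    Real.exp (-((x - μ) ⬝ᵥ (S⁻¹ *ᵥ (x - μ))) / 2)

/-!
With `z = Σ⁻¹ (x - μ)` one has `∂f/∂μ_t = z_t f` and `∂z_i/∂μ_t = -(Σ⁻¹)_{i t}`, and `Σ⁻¹` is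
symmetric. So every mean derivative of `f` is a polynomial in `z` times `f`, and applying the
product rule six times produces exactly the three sums over partitions.
-/

section PartialDerivative

variable {ι : Type*} [Fintype ι] [DecidableEq ι] (i : ι) {F G : (ι → ℝ) → ℝ}

theorem pd_const (c : ℝ) : pd i (fun _ => c) = fun _ => 0 := by
  funext a; simp [pd]

theorem pd_add (hF : Differentiable ℝ F) (hG : Differentiable ℝ G) :
    pd i (fun a => F a + G a) = fun a => pd i F a + pd i G a := by
  funext a; simp [pd, fderiv_fun_add (hF a) (hG a)]

theorem pd_mul (hF : Differentiable ℝ F) (hG : Differentiable ℝ G) :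
    pd i (fun a => F a * G a) = fun a => pd i F a * G a + F a * pd i G a := by
  funext a; simp only [pd, fderiv_fun_mul (hF a) (hG a)]
  simp only [_root_.add_apply, _root_.smul_apply, smul_eq_mul]
  ring

theorem pd_sum {κ : Type*} (s : Finset κ) {F : κ → (ι → ℝ) → ℝ}
    (hF : ∀ k, Differentiable ℝ (F k)) :
    pd i (fun a => ∑ k ∈ s, F k a) = fun a => ∑ k ∈ s, pd i (F k) a := by
  funext a; simp [pd, fderiv_fun_sum fun k _ => hF k a]

theorem pd_exp (hF : Differentiable ℝ F) :
    pd i (fun a => exp (F a)) = fun a => exp (F a) * pd i F a := by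
  funext a; simp [pd, fderiv_exp (hF a)]

end PartialDerivative

@[fun_prop]
theorem differentiable_mulVec {n : Type*} [Fintype n] (A : Matrix n n ℝ) :
    Differentiable ℝ (fun v : n → ℝ => A *ᵥ v) :=
  (LinearMap.toContinuousLinearMap A.mulVecLin).differentiable

@[fun_prop]
theorem differentiable_dotProduct {n : Type*} [Fintype n] :
    Differentiable ℝ (fun p : (n → ℝ) × (n → ℝ) => p.1 ⬝ᵥ p.2) := by
  unfold dotProduct; fun_prop

section AffineQuadratic

variable {ι : Type*} [Fintype ι] [DecidableEq ι] (A : Matrix ι ι ℝ) (x : ι → ℝ)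

theorem pd_mulVec_sub (t i : ι) :
    pd t (fun μ => (A *ᵥ (x - μ)) i) = fun _ => -A i t := by
  funext μ
  let L := (ContinuousLinearMap.proj i).comp (LinearMap.toContinuousLinearMap A.mulVecLin)
  have hL : (fun μ => (A *ᵥ (x - μ)) i) = fun μ => L x - L μ := by
    funext μ; simp [L, mulVec_sub]
  simp only [pd, hL, (L.hasFDerivAt.const_sub (L x)).fderiv]
  simp [L]

theorem pd_mulVec_sub_of_isSymm (hA : A.IsSymm) (t i : ι) :
    pd t (fun μ => (A *ᵥ (x - μ)) i) = fun _ => -A t i := by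
  rw [pd_mulVec_sub, hA.apply]

theorem pd_dotProduct_mulVec_sub (t : ι) :
    pd t (fun μ => (x - μ) ⬝ᵥ (A *ᵥ (x - μ))) =
      fun μ => -(A *ᵥ (x - μ)) t - (Aᵀ *ᵥ (x - μ)) t := by
  -- Writing `x - μ` as `1 *ᵥ (x - μ)` lets `pd_mulVec_sub` differentiate both factors.
  have hsum : (fun μ => (x - μ) ⬝ᵥ (A *ᵥ (x - μ))) =
      fun μ => ∑ j, (1 *ᵥ (x - μ)) j * (A *ᵥ (x - μ)) j := by
    simp [dotProduct]
  rw [hsum, pd_sum _ _ fun j => by fun_prop]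
  funext μ
  simp (disch := fun_prop) only [pd_mul, pd_mulVec_sub]
  simp only [Finset.sum_add_distrib, one_mulVec, mul_neg, neg_mul, Finset.sum_neg_distrib, one_apply,
    ite_mul, one_mul, zero_mul, Finset.sum_ite_eq', Finset.mem_univ, if_true, mulVec_transpose]
  rw [sub_eq_add_neg]
  rfl

end AffineQuadratic

@[fun_prop]
theorem differentiable_normpdf (d : ℕ) (x : Fin d → ℝ) (S : Matrix (Fin d) (Fin d) ℝ) :
    Differentiable ℝ (fun μ => normpdf d x μ S) := by
  unfold normpdf; fun_prop

theorem pd_normpdf {d : ℕ} (x : Fin d → ℝ) {S : Matrix (Fin d) (Fin d) ℝ} (hS : S.IsSymm)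
    (t : Fin d) :
    pd t (fun μ => normpdf d x μ S) = fun μ => (S⁻¹ *ᵥ (x - μ)) t * normpdf d x μ S := by
  have h : (fun μ => normpdf d x μ S) = fun μ => (2 * π) ^ (-(d : ℝ) / 2) *
      S.det ^ (-(1 : ℝ) / 2) * exp (-(1 / 2) * ((x - μ) ⬝ᵥ (S⁻¹ *ᵥ (x - μ)))) := by
    funext μ; unfold normpdf; ring_nf
  rw [h]
  simp (disch := fun_prop) only [pd_mul, pd_const, pd_exp, pd_dotProduct_mulVec_sub, hS.inv.eq]
  funext μ
  unfold normpdf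
  ring_nf

theorem normpdf_deriv_mu6_general
    (d : ℕ) (x μ : Fin d → ℝ) (Sg : Matrix (Fin d) (Fin d) ℝ)
    (hSg : Sg.PosDef) (t1 t2 t3 t4 t5 t6 : Fin d) :
    pd t1 (pd t2 (pd t3 (pd t4 (pd t5 (pd t6 (fun μ' => normpdf d x μ' Sg)))))) μ =
      (-(Sg⁻¹ t1 t2 * Sg⁻¹ t3 t4 * Sg⁻¹ t5 t6
          + Sg⁻¹ t1 t2 * Sg⁻¹ t3 t5 * Sg⁻¹ t4 t6
          + Sg⁻¹ t1 t2 * Sg⁻¹ t3 t6 * Sg⁻¹ t4 t5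
          + Sg⁻¹ t1 t3 * Sg⁻¹ t2 t4 * Sg⁻¹ t5 t6
          + Sg⁻¹ t1 t3 * Sg⁻¹ t2 t5 * Sg⁻¹ t4 t6
          + Sg⁻¹ t1 t3 * Sg⁻¹ t2 t6 * Sg⁻¹ t4 t5
          + Sg⁻¹ t1 t4 * Sg⁻¹ t2 t3 * Sg⁻¹ t5 t6
          + Sg⁻¹ t1 t4 * Sg⁻¹ t2 t5 * Sg⁻¹ t3 t6
          + Sg⁻¹ t1 t4 * Sg⁻¹ t2 t6 * Sg⁻¹ t3 t5
          + Sg⁻¹ t1 t5 * Sg⁻¹ t2 t3 * Sg⁻¹ t4 t6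
          + Sg⁻¹ t1 t5 * Sg⁻¹ t2 t4 * Sg⁻¹ t3 t6
          + Sg⁻¹ t1 t5 * Sg⁻¹ t2 t6 * Sg⁻¹ t3 t4
          + Sg⁻¹ t1 t6 * Sg⁻¹ t2 t3 * Sg⁻¹ t4 t5
          + Sg⁻¹ t1 t6 * Sg⁻¹ t2 t4 * Sg⁻¹ t3 t5
          + Sg⁻¹ t1 t6 * Sg⁻¹ t2 t5 * Sg⁻¹ t3 t4)
        + (Sg⁻¹ t3 t4 * Sg⁻¹ t5 t6 * (Sg⁻¹ *ᵥ (x - μ)) t1 * (Sg⁻¹ *ᵥ (x - μ)) t2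
          + Sg⁻¹ t3 t5 * Sg⁻¹ t4 t6 * (Sg⁻¹ *ᵥ (x - μ)) t1 * (Sg⁻¹ *ᵥ (x - μ)) t2
          + Sg⁻¹ t3 t6 * Sg⁻¹ t4 t5 * (Sg⁻¹ *ᵥ (x - μ)) t1 * (Sg⁻¹ *ᵥ (x - μ)) t2
          + Sg⁻¹ t2 t4 * Sg⁻¹ t5 t6 * (Sg⁻¹ *ᵥ (x - μ)) t1 * (Sg⁻¹ *ᵥ (x - μ)) t3
          + Sg⁻¹ t2 t5 * Sg⁻¹ t4 t6 * (Sg⁻¹ *ᵥ (x - μ)) t1 * (Sg⁻¹ *ᵥ (x - μ)) t3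
          + Sg⁻¹ t2 t6 * Sg⁻¹ t4 t5 * (Sg⁻¹ *ᵥ (x - μ)) t1 * (Sg⁻¹ *ᵥ (x - μ)) t3
          + Sg⁻¹ t2 t3 * Sg⁻¹ t5 t6 * (Sg⁻¹ *ᵥ (x - μ)) t1 * (Sg⁻¹ *ᵥ (x - μ)) t4
          + Sg⁻¹ t2 t5 * Sg⁻¹ t3 t6 * (Sg⁻¹ *ᵥ (x - μ)) t1 * (Sg⁻¹ *ᵥ (x - μ)) t4
          + Sg⁻¹ t2 t6 * Sg⁻¹ t3 t5 * (Sg⁻¹ *ᵥ (x - μ)) t1 * (Sg⁻¹ *ᵥ (x - μ)) t4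
          + Sg⁻¹ t2 t3 * Sg⁻¹ t4 t6 * (Sg⁻¹ *ᵥ (x - μ)) t1 * (Sg⁻¹ *ᵥ (x - μ)) t5
          + Sg⁻¹ t2 t4 * Sg⁻¹ t3 t6 * (Sg⁻¹ *ᵥ (x - μ)) t1 * (Sg⁻¹ *ᵥ (x - μ)) t5
          + Sg⁻¹ t2 t6 * Sg⁻¹ t3 t4 * (Sg⁻¹ *ᵥ (x - μ)) t1 * (Sg⁻¹ *ᵥ (x - μ)) t5
          + Sg⁻¹ t2 t3 * Sg⁻¹ t4 t5 * (Sg⁻¹ *ᵥ (x - μ)) t1 * (Sg⁻¹ *ᵥ (x - μ)) t6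
          + Sg⁻¹ t2 t4 * Sg⁻¹ t3 t5 * (Sg⁻¹ *ᵥ (x - μ)) t1 * (Sg⁻¹ *ᵥ (x - μ)) t6
          + Sg⁻¹ t2 t5 * Sg⁻¹ t3 t4 * (Sg⁻¹ *ᵥ (x - μ)) t1 * (Sg⁻¹ *ᵥ (x - μ)) t6
          + Sg⁻¹ t1 t4 * Sg⁻¹ t5 t6 * (Sg⁻¹ *ᵥ (x - μ)) t2 * (Sg⁻¹ *ᵥ (x - μ)) t3
          + Sg⁻¹ t1 t5 * Sg⁻¹ t4 t6 * (Sg⁻¹ *ᵥ (x - μ)) t2 * (Sg⁻¹ *ᵥ (x - μ)) t3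
          + Sg⁻¹ t1 t6 * Sg⁻¹ t4 t5 * (Sg⁻¹ *ᵥ (x - μ)) t2 * (Sg⁻¹ *ᵥ (x - μ)) t3
          + Sg⁻¹ t1 t3 * Sg⁻¹ t5 t6 * (Sg⁻¹ *ᵥ (x - μ)) t2 * (Sg⁻¹ *ᵥ (x - μ)) t4
          + Sg⁻¹ t1 t5 * Sg⁻¹ t3 t6 * (Sg⁻¹ *ᵥ (x - μ)) t2 * (Sg⁻¹ *ᵥ (x - μ)) t4
          + Sg⁻¹ t1 t6 * Sg⁻¹ t3 t5 * (Sg⁻¹ *ᵥ (x - μ)) t2 * (Sg⁻¹ *ᵥ (x - μ)) t4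
          + Sg⁻¹ t1 t3 * Sg⁻¹ t4 t6 * (Sg⁻¹ *ᵥ (x - μ)) t2 * (Sg⁻¹ *ᵥ (x - μ)) t5
          + Sg⁻¹ t1 t4 * Sg⁻¹ t3 t6 * (Sg⁻¹ *ᵥ (x - μ)) t2 * (Sg⁻¹ *ᵥ (x - μ)) t5
          + Sg⁻¹ t1 t6 * Sg⁻¹ t3 t4 * (Sg⁻¹ *ᵥ (x - μ)) t2 * (Sg⁻¹ *ᵥ (x - μ)) t5
          + Sg⁻¹ t1 t3 * Sg⁻¹ t4 t5 * (Sg⁻¹ *ᵥ (x - μ)) t2 * (Sg⁻¹ *ᵥ (x - μ)) t6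
          + Sg⁻¹ t1 t4 * Sg⁻¹ t3 t5 * (Sg⁻¹ *ᵥ (x - μ)) t2 * (Sg⁻¹ *ᵥ (x - μ)) t6
          + Sg⁻¹ t1 t5 * Sg⁻¹ t3 t4 * (Sg⁻¹ *ᵥ (x - μ)) t2 * (Sg⁻¹ *ᵥ (x - μ)) t6
          + Sg⁻¹ t1 t2 * Sg⁻¹ t5 t6 * (Sg⁻¹ *ᵥ (x - μ)) t3 * (Sg⁻¹ *ᵥ (x - μ)) t4
          + Sg⁻¹ t1 t5 * Sg⁻¹ t2 t6 * (Sg⁻¹ *ᵥ (x - μ)) t3 * (Sg⁻¹ *ᵥ (x - μ)) t4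
          + Sg⁻¹ t1 t6 * Sg⁻¹ t2 t5 * (Sg⁻¹ *ᵥ (x - μ)) t3 * (Sg⁻¹ *ᵥ (x - μ)) t4
          + Sg⁻¹ t1 t2 * Sg⁻¹ t4 t6 * (Sg⁻¹ *ᵥ (x - μ)) t3 * (Sg⁻¹ *ᵥ (x - μ)) t5
          + Sg⁻¹ t1 t4 * Sg⁻¹ t2 t6 * (Sg⁻¹ *ᵥ (x - μ)) t3 * (Sg⁻¹ *ᵥ (x - μ)) t5
          + Sg⁻¹ t1 t6 * Sg⁻¹ t2 t4 * (Sg⁻¹ *ᵥ (x - μ)) t3 * (Sg⁻¹ *ᵥ (x - μ)) t5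
          + Sg⁻¹ t1 t2 * Sg⁻¹ t4 t5 * (Sg⁻¹ *ᵥ (x - μ)) t3 * (Sg⁻¹ *ᵥ (x - μ)) t6
          + Sg⁻¹ t1 t4 * Sg⁻¹ t2 t5 * (Sg⁻¹ *ᵥ (x - μ)) t3 * (Sg⁻¹ *ᵥ (x - μ)) t6
          + Sg⁻¹ t1 t5 * Sg⁻¹ t2 t4 * (Sg⁻¹ *ᵥ (x - μ)) t3 * (Sg⁻¹ *ᵥ (x - μ)) t6
          + Sg⁻¹ t1 t2 * Sg⁻¹ t3 t6 * (Sg⁻¹ *ᵥ (x - μ)) t4 * (Sg⁻¹ *ᵥ (x - μ)) t5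
          + Sg⁻¹ t1 t3 * Sg⁻¹ t2 t6 * (Sg⁻¹ *ᵥ (x - μ)) t4 * (Sg⁻¹ *ᵥ (x - μ)) t5
          + Sg⁻¹ t1 t6 * Sg⁻¹ t2 t3 * (Sg⁻¹ *ᵥ (x - μ)) t4 * (Sg⁻¹ *ᵥ (x - μ)) t5
          + Sg⁻¹ t1 t2 * Sg⁻¹ t3 t5 * (Sg⁻¹ *ᵥ (x - μ)) t4 * (Sg⁻¹ *ᵥ (x - μ)) t6
          + Sg⁻¹ t1 t3 * Sg⁻¹ t2 t5 * (Sg⁻¹ *ᵥ (x - μ)) t4 * (Sg⁻¹ *ᵥ (x - μ)) t6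
          + Sg⁻¹ t1 t5 * Sg⁻¹ t2 t3 * (Sg⁻¹ *ᵥ (x - μ)) t4 * (Sg⁻¹ *ᵥ (x - μ)) t6
          + Sg⁻¹ t1 t2 * Sg⁻¹ t3 t4 * (Sg⁻¹ *ᵥ (x - μ)) t5 * (Sg⁻¹ *ᵥ (x - μ)) t6
          + Sg⁻¹ t1 t3 * Sg⁻¹ t2 t4 * (Sg⁻¹ *ᵥ (x - μ)) t5 * (Sg⁻¹ *ᵥ (x - μ)) t6
          + Sg⁻¹ t1 t4 * Sg⁻¹ t2 t3 * (Sg⁻¹ *ᵥ (x - μ)) t5 * (Sg⁻¹ *ᵥ (x - μ)) t6)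
        - (Sg⁻¹ t1 t2 * (Sg⁻¹ *ᵥ (x - μ)) t3 * (Sg⁻¹ *ᵥ (x - μ)) t4 * (Sg⁻¹ *ᵥ (x - μ)) t5 * (Sg⁻¹ *ᵥ (x - μ)) t6
          + Sg⁻¹ t1 t3 * (Sg⁻¹ *ᵥ (x - μ)) t2 * (Sg⁻¹ *ᵥ (x - μ)) t4 * (Sg⁻¹ *ᵥ (x - μ)) t5 * (Sg⁻¹ *ᵥ (x - μ)) t6
          + Sg⁻¹ t1 t4 * (Sg⁻¹ *ᵥ (x - μ)) t2 * (Sg⁻¹ *ᵥ (x - μ)) t3 * (Sg⁻¹ *ᵥ (x - μ)) t5 * (Sg⁻¹ *ᵥ (x - μ)) t6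
          + Sg⁻¹ t1 t5 * (Sg⁻¹ *ᵥ (x - μ)) t2 * (Sg⁻¹ *ᵥ (x - μ)) t3 * (Sg⁻¹ *ᵥ (x - μ)) t4 * (Sg⁻¹ *ᵥ (x - μ)) t6
          + Sg⁻¹ t1 t6 * (Sg⁻¹ *ᵥ (x - μ)) t2 * (Sg⁻¹ *ᵥ (x - μ)) t3 * (Sg⁻¹ *ᵥ (x - μ)) t4 * (Sg⁻¹ *ᵥ (x - μ)) t5
          + Sg⁻¹ t2 t3 * (Sg⁻¹ *ᵥ (x - μ)) t1 * (Sg⁻¹ *ᵥ (x - μ)) t4 * (Sg⁻¹ *ᵥ (x - μ)) t5 * (Sg⁻¹ *ᵥ (x - μ)) t6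
          + Sg⁻¹ t2 t4 * (Sg⁻¹ *ᵥ (x - μ)) t1 * (Sg⁻¹ *ᵥ (x - μ)) t3 * (Sg⁻¹ *ᵥ (x - μ)) t5 * (Sg⁻¹ *ᵥ (x - μ)) t6
          + Sg⁻¹ t2 t5 * (Sg⁻¹ *ᵥ (x - μ)) t1 * (Sg⁻¹ *ᵥ (x - μ)) t3 * (Sg⁻¹ *ᵥ (x - μ)) t4 * (Sg⁻¹ *ᵥ (x - μ)) t6
          + Sg⁻¹ t2 t6 * (Sg⁻¹ *ᵥ (x - μ)) t1 * (Sg⁻¹ *ᵥ (x - μ)) t3 * (Sg⁻¹ *ᵥ (x - μ)) t4 * (Sg⁻¹ *ᵥ (x - μ)) t5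
          + Sg⁻¹ t3 t4 * (Sg⁻¹ *ᵥ (x - μ)) t1 * (Sg⁻¹ *ᵥ (x - μ)) t2 * (Sg⁻¹ *ᵥ (x - μ)) t5 * (Sg⁻¹ *ᵥ (x - μ)) t6
          + Sg⁻¹ t3 t5 * (Sg⁻¹ *ᵥ (x - μ)) t1 * (Sg⁻¹ *ᵥ (x - μ)) t2 * (Sg⁻¹ *ᵥ (x - μ)) t4 * (Sg⁻¹ *ᵥ (x - μ)) t6
          + Sg⁻¹ t3 t6 * (Sg⁻¹ *ᵥ (x - μ)) t1 * (Sg⁻¹ *ᵥ (x - μ)) t2 * (Sg⁻¹ *ᵥ (x - μ)) t4 * (Sg⁻¹ *ᵥ (x - μ)) t5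
          + Sg⁻¹ t4 t5 * (Sg⁻¹ *ᵥ (x - μ)) t1 * (Sg⁻¹ *ᵥ (x - μ)) t2 * (Sg⁻¹ *ᵥ (x - μ)) t3 * (Sg⁻¹ *ᵥ (x - μ)) t6
          + Sg⁻¹ t4 t6 * (Sg⁻¹ *ᵥ (x - μ)) t1 * (Sg⁻¹ *ᵥ (x - μ)) t2 * (Sg⁻¹ *ᵥ (x - μ)) t3 * (Sg⁻¹ *ᵥ (x - μ)) t5
          + Sg⁻¹ t5 t6 * (Sg⁻¹ *ᵥ (x - μ)) t1 * (Sg⁻¹ *ᵥ (x - μ)) t2 * (Sg⁻¹ *ᵥ (x - μ)) t3 * (Sg⁻¹ *ᵥ (x - μ)) t4)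
        + (Sg⁻¹ *ᵥ (x - μ)) t1 * (Sg⁻¹ *ᵥ (x - μ)) t2 * (Sg⁻¹ *ᵥ (x - μ)) t3 * (Sg⁻¹ *ᵥ (x - μ)) t4 * (Sg⁻¹ *ᵥ (x - μ)) t5 * (Sg⁻¹ *ᵥ (x - μ)) t6)
      * normpdf d x μ Sg := by
  have hS : Sg.IsSymm := isHermitian_iff_isSymm.1 hSg.isHermitian
  simp (disch := fun_prop) only [pd_normpdf x hS, pd_mul, pd_add, pd_const,
    pd_mulVec_sub_of_isSymm _ _ hS.inv, zero_mul, zero_add]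
  ring

/-- explicit formula for the sixth-order mean derivatives of the
`d`-variate normal density, with `s i j := (Σ⁻¹) i j` and `z i := (Σ⁻¹ (x − μ)) i`.
The three sums over partitions of `{1,…,6}` (into three pairs; into two pairs and
two singletons; into one pair and one four-element set) are written out term by term. -/
theorem normpdf_deriv_mu6
    (d : ℕ) (hd : 1 ≤ d) (x μ : Fin d → ℝ) (Sg : Matrix (Fin d) (Fin d) ℝ)
    (hSg : Sg.PosDef) (t1 t2 t3 t4 t5 t6 : Fin d) :
    pd t1 (pd t2 (pd t3 (pd t4 (pd t5 (pd t6 (fun μ' => normpdf d x μ' Sg)))))) μ =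
      (-(Sg⁻¹ t1 t2 * Sg⁻¹ t3 t4 * Sg⁻¹ t5 t6
          + Sg⁻¹ t1 t2 * Sg⁻¹ t3 t5 * Sg⁻¹ t4 t6
          + Sg⁻¹ t1 t2 * Sg⁻¹ t3 t6 * Sg⁻¹ t4 t5
          + Sg⁻¹ t1 t3 * Sg⁻¹ t2 t4 * Sg⁻¹ t5 t6
          + Sg⁻¹ t1 t3 * Sg⁻¹ t2 t5 * Sg⁻¹ t4 t6
          + Sg⁻¹ t1 t3 * Sg⁻¹ t2 t6 * Sg⁻¹ t4 t5
          + Sg⁻¹ t1 t4 * Sg⁻¹ t2 t3 * Sg⁻¹ t5 t6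
          + Sg⁻¹ t1 t4 * Sg⁻¹ t2 t5 * Sg⁻¹ t3 t6
          + Sg⁻¹ t1 t4 * Sg⁻¹ t2 t6 * Sg⁻¹ t3 t5
          + Sg⁻¹ t1 t5 * Sg⁻¹ t2 t3 * Sg⁻¹ t4 t6
          + Sg⁻¹ t1 t5 * Sg⁻¹ t2 t4 * Sg⁻¹ t3 t6
          + Sg⁻¹ t1 t5 * Sg⁻¹ t2 t6 * Sg⁻¹ t3 t4
          + Sg⁻¹ t1 t6 * Sg⁻¹ t2 t3 * Sg⁻¹ t4 t5
          + Sg⁻¹ t1 t6 * Sg⁻¹ t2 t4 * Sg⁻¹ t3 t5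
          + Sg⁻¹ t1 t6 * Sg⁻¹ t2 t5 * Sg⁻¹ t3 t4)
        + (Sg⁻¹ t3 t4 * Sg⁻¹ t5 t6 * (Sg⁻¹ *ᵥ (x - μ)) t1 * (Sg⁻¹ *ᵥ (x - μ)) t2
          + Sg⁻¹ t3 t5 * Sg⁻¹ t4 t6 * (Sg⁻¹ *ᵥ (x - μ)) t1 * (Sg⁻¹ *ᵥ (x - μ)) t2
          + Sg⁻¹ t3 t6 * Sg⁻¹ t4 t5 * (Sg⁻¹ *ᵥ (x - μ)) t1 * (Sg⁻¹ *ᵥ (x - μ)) t2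
          + Sg⁻¹ t2 t4 * Sg⁻¹ t5 t6 * (Sg⁻¹ *ᵥ (x - μ)) t1 * (Sg⁻¹ *ᵥ (x - μ)) t3
          + Sg⁻¹ t2 t5 * Sg⁻¹ t4 t6 * (Sg⁻¹ *ᵥ (x - μ)) t1 * (Sg⁻¹ *ᵥ (x - μ)) t3
          + Sg⁻¹ t2 t6 * Sg⁻¹ t4 t5 * (Sg⁻¹ *ᵥ (x - μ)) t1 * (Sg⁻¹ *ᵥ (x - μ)) t3
          + Sg⁻¹ t2 t3 * Sg⁻¹ t5 t6 * (Sg⁻¹ *ᵥ (x - μ)) t1 * (Sg⁻¹ *ᵥ (x - μ)) t4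
          + Sg⁻¹ t2 t5 * Sg⁻¹ t3 t6 * (Sg⁻¹ *ᵥ (x - μ)) t1 * (Sg⁻¹ *ᵥ (x - μ)) t4
          + Sg⁻¹ t2 t6 * Sg⁻¹ t3 t5 * (Sg⁻¹ *ᵥ (x - μ)) t1 * (Sg⁻¹ *ᵥ (x - μ)) t4
          + Sg⁻¹ t2 t3 * Sg⁻¹ t4 t6 * (Sg⁻¹ *ᵥ (x - μ)) t1 * (Sg⁻¹ *ᵥ (x - μ)) t5
          + Sg⁻¹ t2 t4 * Sg⁻¹ t3 t6 * (Sg⁻¹ *ᵥ (x - μ)) t1 * (Sg⁻¹ *ᵥ (x - μ)) t5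
          + Sg⁻¹ t2 t6 * Sg⁻¹ t3 t4 * (Sg⁻¹ *ᵥ (x - μ)) t1 * (Sg⁻¹ *ᵥ (x - μ)) t5
          + Sg⁻¹ t2 t3 * Sg⁻¹ t4 t5 * (Sg⁻¹ *ᵥ (x - μ)) t1 * (Sg⁻¹ *ᵥ (x - μ)) t6
          + Sg⁻¹ t2 t4 * Sg⁻¹ t3 t5 * (Sg⁻¹ *ᵥ (x - μ)) t1 * (Sg⁻¹ *ᵥ (x - μ)) t6
          + Sg⁻¹ t2 t5 * Sg⁻¹ t3 t4 * (Sg⁻¹ *ᵥ (x - μ)) t1 * (Sg⁻¹ *ᵥ (x - μ)) t6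
          + Sg⁻¹ t1 t4 * Sg⁻¹ t5 t6 * (Sg⁻¹ *ᵥ (x - μ)) t2 * (Sg⁻¹ *ᵥ (x - μ)) t3
          + Sg⁻¹ t1 t5 * Sg⁻¹ t4 t6 * (Sg⁻¹ *ᵥ (x - μ)) t2 * (Sg⁻¹ *ᵥ (x - μ)) t3
          + Sg⁻¹ t1 t6 * Sg⁻¹ t4 t5 * (Sg⁻¹ *ᵥ (x - μ)) t2 * (Sg⁻¹ *ᵥ (x - μ)) t3
          + Sg⁻¹ t1 t3 * Sg⁻¹ t5 t6 * (Sg⁻¹ *ᵥ (x - μ)) t2 * (Sg⁻¹ *ᵥ (x - μ)) t4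
          + Sg⁻¹ t1 t5 * Sg⁻¹ t3 t6 * (Sg⁻¹ *ᵥ (x - μ)) t2 * (Sg⁻¹ *ᵥ (x - μ)) t4
          + Sg⁻¹ t1 t6 * Sg⁻¹ t3 t5 * (Sg⁻¹ *ᵥ (x - μ)) t2 * (Sg⁻¹ *ᵥ (x - μ)) t4
          + Sg⁻¹ t1 t3 * Sg⁻¹ t4 t6 * (Sg⁻¹ *ᵥ (x - μ)) t2 * (Sg⁻¹ *ᵥ (x - μ)) t5
          + Sg⁻¹ t1 t4 * Sg⁻¹ t3 t6 * (Sg⁻¹ *ᵥ (x - μ)) t2 * (Sg⁻¹ *ᵥ (x - μ)) t5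
          + Sg⁻¹ t1 t6 * Sg⁻¹ t3 t4 * (Sg⁻¹ *ᵥ (x - μ)) t2 * (Sg⁻¹ *ᵥ (x - μ)) t5
          + Sg⁻¹ t1 t3 * Sg⁻¹ t4 t5 * (Sg⁻¹ *ᵥ (x - μ)) t2 * (Sg⁻¹ *ᵥ (x - μ)) t6
          + Sg⁻¹ t1 t4 * Sg⁻¹ t3 t5 * (Sg⁻¹ *ᵥ (x - μ)) t2 * (Sg⁻¹ *ᵥ (x - μ)) t6
          + Sg⁻¹ t1 t5 * Sg⁻¹ t3 t4 * (Sg⁻¹ *ᵥ (x - μ)) t2 * (Sg⁻¹ *ᵥ (x - μ)) t6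
          + Sg⁻¹ t1 t2 * Sg⁻¹ t5 t6 * (Sg⁻¹ *ᵥ (x - μ)) t3 * (Sg⁻¹ *ᵥ (x - μ)) t4
          + Sg⁻¹ t1 t5 * Sg⁻¹ t2 t6 * (Sg⁻¹ *ᵥ (x - μ)) t3 * (Sg⁻¹ *ᵥ (x - μ)) t4
          + Sg⁻¹ t1 t6 * Sg⁻¹ t2 t5 * (Sg⁻¹ *ᵥ (x - μ)) t3 * (Sg⁻¹ *ᵥ (x - μ)) t4
          + Sg⁻¹ t1 t2 * Sg⁻¹ t4 t6 * (Sg⁻¹ *ᵥ (x - μ)) t3 * (Sg⁻¹ *ᵥ (x - μ)) t5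
          + Sg⁻¹ t1 t4 * Sg⁻¹ t2 t6 * (Sg⁻¹ *ᵥ (x - μ)) t3 * (Sg⁻¹ *ᵥ (x - μ)) t5
          + Sg⁻¹ t1 t6 * Sg⁻¹ t2 t4 * (Sg⁻¹ *ᵥ (x - μ)) t3 * (Sg⁻¹ *ᵥ (x - μ)) t5
          + Sg⁻¹ t1 t2 * Sg⁻¹ t4 t5 * (Sg⁻¹ *ᵥ (x - μ)) t3 * (Sg⁻¹ *ᵥ (x - μ)) t6
          + Sg⁻¹ t1 t4 * Sg⁻¹ t2 t5 * (Sg⁻¹ *ᵥ (x - μ)) t3 * (Sg⁻¹ *ᵥ (x - μ)) t6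
          + Sg⁻¹ t1 t5 * Sg⁻¹ t2 t4 * (Sg⁻¹ *ᵥ (x - μ)) t3 * (Sg⁻¹ *ᵥ (x - μ)) t6
          + Sg⁻¹ t1 t2 * Sg⁻¹ t3 t6 * (Sg⁻¹ *ᵥ (x - μ)) t4 * (Sg⁻¹ *ᵥ (x - μ)) t5
          + Sg⁻¹ t1 t3 * Sg⁻¹ t2 t6 * (Sg⁻¹ *ᵥ (x - μ)) t4 * (Sg⁻¹ *ᵥ (x - μ)) t5
          + Sg⁻¹ t1 t6 * Sg⁻¹ t2 t3 * (Sg⁻¹ *ᵥ (x - μ)) t4 * (Sg⁻¹ *ᵥ (x - μ)) t5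
          + Sg⁻¹ t1 t2 * Sg⁻¹ t3 t5 * (Sg⁻¹ *ᵥ (x - μ)) t4 * (Sg⁻¹ *ᵥ (x - μ)) t6
          + Sg⁻¹ t1 t3 * Sg⁻¹ t2 t5 * (Sg⁻¹ *ᵥ (x - μ)) t4 * (Sg⁻¹ *ᵥ (x - μ)) t6
          + Sg⁻¹ t1 t5 * Sg⁻¹ t2 t3 * (Sg⁻¹ *ᵥ (x - μ)) t4 * (Sg⁻¹ *ᵥ (x - μ)) t6
          + Sg⁻¹ t1 t2 * Sg⁻¹ t3 t4 * (Sg⁻¹ *ᵥ (x - μ)) t5 * (Sg⁻¹ *ᵥ (x - μ)) t6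
          + Sg⁻¹ t1 t3 * Sg⁻¹ t2 t4 * (Sg⁻¹ *ᵥ (x - μ)) t5 * (Sg⁻¹ *ᵥ (x - μ)) t6
          + Sg⁻¹ t1 t4 * Sg⁻¹ t2 t3 * (Sg⁻¹ *ᵥ (x - μ)) t5 * (Sg⁻¹ *ᵥ (x - μ)) t6)
        - (Sg⁻¹ t1 t2 * (Sg⁻¹ *ᵥ (x - μ)) t3 * (Sg⁻¹ *ᵥ (x - μ)) t4 * (Sg⁻¹ *ᵥ (x - μ)) t5 * (Sg⁻¹ *ᵥ (x - μ)) t6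
          + Sg⁻¹ t1 t3 * (Sg⁻¹ *ᵥ (x - μ)) t2 * (Sg⁻¹ *ᵥ (x - μ)) t4 * (Sg⁻¹ *ᵥ (x - μ)) t5 * (Sg⁻¹ *ᵥ (x - μ)) t6
          + Sg⁻¹ t1 t4 * (Sg⁻¹ *ᵥ (x - μ)) t2 * (Sg⁻¹ *ᵥ (x - μ)) t3 * (Sg⁻¹ *ᵥ (x - μ)) t5 * (Sg⁻¹ *ᵥ (x - μ)) t6
          + Sg⁻¹ t1 t5 * (Sg⁻¹ *ᵥ (x - μ)) t2 * (Sg⁻¹ *ᵥ (x - μ)) t3 * (Sg⁻¹ *ᵥ (x - μ)) t4 * (Sg⁻¹ *ᵥ (x - μ)) t6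
          + Sg⁻¹ t1 t6 * (Sg⁻¹ *ᵥ (x - μ)) t2 * (Sg⁻¹ *ᵥ (x - μ)) t3 * (Sg⁻¹ *ᵥ (x - μ)) t4 * (Sg⁻¹ *ᵥ (x - μ)) t5
          + Sg⁻¹ t2 t3 * (Sg⁻¹ *ᵥ (x - μ)) t1 * (Sg⁻¹ *ᵥ (x - μ)) t4 * (Sg⁻¹ *ᵥ (x - μ)) t5 * (Sg⁻¹ *ᵥ (x - μ)) t6
          + Sg⁻¹ t2 t4 * (Sg⁻¹ *ᵥ (x - μ)) t1 * (Sg⁻¹ *ᵥ (x - μ)) t3 * (Sg⁻¹ *ᵥ (x - μ)) t5 * (Sg⁻¹ *ᵥ (x - μ)) t6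
          + Sg⁻¹ t2 t5 * (Sg⁻¹ *ᵥ (x - μ)) t1 * (Sg⁻¹ *ᵥ (x - μ)) t3 * (Sg⁻¹ *ᵥ (x - μ)) t4 * (Sg⁻¹ *ᵥ (x - μ)) t6
          + Sg⁻¹ t2 t6 * (Sg⁻¹ *ᵥ (x - μ)) t1 * (Sg⁻¹ *ᵥ (x - μ)) t3 * (Sg⁻¹ *ᵥ (x - μ)) t4 * (Sg⁻¹ *ᵥ (x - μ)) t5
          + Sg⁻¹ t3 t4 * (Sg⁻¹ *ᵥ (x - μ)) t1 * (Sg⁻¹ *ᵥ (x - μ)) t2 * (Sg⁻¹ *ᵥ (x - μ)) t5 * (Sg⁻¹ *ᵥ (x - μ)) t6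
          + Sg⁻¹ t3 t5 * (Sg⁻¹ *ᵥ (x - μ)) t1 * (Sg⁻¹ *ᵥ (x - μ)) t2 * (Sg⁻¹ *ᵥ (x - μ)) t4 * (Sg⁻¹ *ᵥ (x - μ)) t6
          + Sg⁻¹ t3 t6 * (Sg⁻¹ *ᵥ (x - μ)) t1 * (Sg⁻¹ *ᵥ (x - μ)) t2 * (Sg⁻¹ *ᵥ (x - μ)) t4 * (Sg⁻¹ *ᵥ (x - μ)) t5
          + Sg⁻¹ t4 t5 * (Sg⁻¹ *ᵥ (x - μ)) t1 * (Sg⁻¹ *ᵥ (x - μ)) t2 * (Sg⁻¹ *ᵥ (x - μ)) t3 * (Sg⁻¹ *ᵥ (x - μ)) t6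
          + Sg⁻¹ t4 t6 * (Sg⁻¹ *ᵥ (x - μ)) t1 * (Sg⁻¹ *ᵥ (x - μ)) t2 * (Sg⁻¹ *ᵥ (x - μ)) t3 * (Sg⁻¹ *ᵥ (x - μ)) t5
          + Sg⁻¹ t5 t6 * (Sg⁻¹ *ᵥ (x - μ)) t1 * (Sg⁻¹ *ᵥ (x - μ)) t2 * (Sg⁻¹ *ᵥ (x - μ)) t3 * (Sg⁻¹ *ᵥ (x - μ)) t4)
        + (Sg⁻¹ *ᵥ (x - μ)) t1 * (Sg⁻¹ *ᵥ (x - μ)) t2 * (Sg⁻¹ *ᵥ (x - μ)) t3 * (Sg⁻¹ *ᵥ (x - μ)) t4 * (Sg⁻¹ *ᵥ (x - μ)) t5 * (Sg⁻¹ *ᵥ (x - μ)) t6)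
      * normpdf d x μ Sg :=
  normpdf_deriv_mu6_general d x μ Sg hSg t1 t2 t3 t4 t5 t6

end
end

section
/- Let x, μ ∈ ℝ^d, let v₀ ∈ ℝ^{d(d+1)/2} be such that S(v₀) is positive definite, let c̃ ∈ ℝ, and define φ(u) := f_v(x; μ, v₀ + c̃·w(uuᵀ)) for u ∈ ℝ^d in a neighborhood of 0. Then for all t1, t2, t3, t4 ∈ {1,…,d}: (i) ∂φ/∂u_{t1}(0) = 0; (ii) ∂²φ/∂u_{t1}∂u_{t2}(0) = 2c̃ · ∂f_v(x;μ,v₀)/∂v_{t1t2}; (iii) ∂³φ/∂u_{t1}∂u_{t2}∂u_{t3}(0) = 0; (iv) ∂⁴φ/∂u_{t1}∂u_{t2}∂u_{t3}∂u_{t4}(0) = 4c̃² ( ∂²f_v/∂v_{t1t4}∂v_{t2t3} + ∂²f_v/∂v_{t1t3}∂v_{t2t4} + ∂²f_v/∂v_{t1t2}∂v_{t3t4} )(x;μ,v₀). -/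
open Real Matrix

noncomputable section

/-- The symmetric matrix `S(v)` built from the coordinates `v = (v_{ij})_{i ≤ j}`,
indexed by unordered pairs (this encodes the convention `v_{ij} = v_{ji}`). -/
def Smat (d : ℕ) (v : Sym2 (Fin d) → ℝ) : Matrix (Fin d) (Fin d) ℝ :=
  Matrix.of fun i j => if i = j then v s(i, i) else v s(i, j) / 2

/-- Normal density in the `(μ, v)` parameterization. -/
def normpdfV (d : ℕ) (x μ : Fin d → ℝ) (v : Sym2 (Fin d) → ℝ) : ℝ :=
  normpdf d x μ (Smat d v)

/-- The half-vectorization `w(A)` of a symmetric matrix `A`: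
`w(A)_{ii} = A_{ii}` and `w(A)_{ij} = 2 A_{ij} = A_{ij} + A_{ji}` for `i ≠ j`. -/
def wvec (d : ℕ) (A : Matrix (Fin d) (Fin d) ℝ) : Sym2 (Fin d) → ℝ :=
  Sym2.lift ⟨fun i j => if i = j then A i i else A i j + A j i, by
    intro i j
    simp only []
    by_cases h : i = j
    · subst h; rfl
    · rw [if_neg h, if_neg fun hji => h hji.symm]
      ring⟩

/-! The path `q(u) = v₀ + c̃ w(u uᵀ)` has derivative `Dq(u) = B u`, where `B u w = 2 c̃ w(u wᵀ)` is
symmetric bilinear with `B eₛ eₜ = 2 c̃ e_{st}`. Each differentiation of `G ∘ q` either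
differentiates a derivative of `G`, creating a new factor `B u _`, or turns a factor `B u _` into a
constant `B _ _`. At `u = 0` every factor `B u _` vanishes, so only the terms all of whose factors
are constant survive: none in odd order, `DG(v₀)(B e e)` in order 2, and in order 4 one term
`D²G(v₀)(B _ _)(B _ _)` per pairing of the four directions. The symmetry of `D²G(v₀)` puts each
pairing in the stated order. -/

open Filter Topology

section DirDeriv

variable {E Y : Type*} [NormedAddCommGroup E] [NormedSpace ℝ E] [NormedAddCommGroup Y]
  [NormedSpace ℝ Y]

def dirDeriv (a : E) (f : E → Y) : E → Y :=
  fun u => fderiv ℝ f u a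

theorem Filter.EventuallyEq.dirDeriv {f g : E → Y} {x : E} (h : f =ᶠ[𝓝 x] g) (a : E) :
    dirDeriv a f =ᶠ[𝓝 x] dirDeriv a g :=
  (h.fderiv (𝕜 := ℝ)).mono fun u hu => by simp only [_root_.dirDeriv, hu]

theorem dirDeriv_dirDeriv {f : E → Y} {x : E} (hf : DifferentiableAt ℝ (fderiv ℝ f) x)
    (a b : E) : dirDeriv a (dirDeriv b f) x = fderiv ℝ (fderiv ℝ f) x a b := by
  change fderiv ℝ (fun y => fderiv ℝ f y b) x a = _
  simp [fderiv_clm_apply hf (differentiableAt_const b)]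

end DirDeriv

theorem ContDiffAt.differentiableAt_fderiv_tower {F : Type*} [NormedAddCommGroup F]
    [NormedSpace ℝ F] {G : F → ℝ} {x : F} (hG : ContDiffAt ℝ 4 G x) :
    DifferentiableAt ℝ G x ∧ DifferentiableAt ℝ (fderiv ℝ G) x ∧
      DifferentiableAt ℝ (fderiv ℝ (fderiv ℝ G)) x ∧
      DifferentiableAt ℝ (fderiv ℝ (fderiv ℝ (fderiv ℝ G))) x := by
  have hG₁ : ContDiffAt ℝ 3 (fderiv ℝ G) x := hG.fderiv_right (by norm_num)
  have hG₂ : ContDiffAt ℝ 2 (fderiv ℝ (fderiv ℝ G)) x := hG₁.fderiv_right (by norm_num)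
  -- instance search does not find the norm on `F →L F →L F →L ℝ`; `fderiv_right` supplies it
  exact ⟨hG.differentiableAt (by norm_num), hG₁.differentiableAt (by norm_num),
    hG₂.differentiableAt (by norm_num),
    (hG₂.fderiv_right (m := 1) le_rfl).differentiableAt one_ne_zero⟩

theorem ContDiffAt.eventually_comp {X F : Type*} [TopologicalSpace X] [NormedAddCommGroup F]
    [NormedSpace ℝ F] {G : F → ℝ} {q : X → F} {n : ℕ} {x : X} (hG : ContDiffAt ℝ n G (q x))
    (hq : ContinuousAt q x) : ∀ᶠ u in 𝓝 x, ContDiffAt ℝ n G (q u) :=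
  hq.eventually (p := fun v => ContDiffAt ℝ n G v) (hG.eventually (by simp))

section QuadraticPath

variable {E F : Type*} [NormedAddCommGroup E] [NormedSpace ℝ E] [NormedAddCommGroup F]
  [NormedSpace ℝ F] {q : E → F} {B : E →L[ℝ] E →L[ℝ] F} {G : F → ℝ} {u : E}

theorem ContinuousLinearMap.hasFDerivAt_apply_self_of_symm (W : E →L[ℝ] E →L[ℝ] F)
    (hW : ∀ u w, W u w = W w u) (u : E) :
    HasFDerivAt (fun u => W u u) ((2 : ℝ) • W u) u := by
  refine (W.hasFDerivAt.clm_apply (hasFDerivAt_id u)).congr_fderiv ?_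
  ext w
  simp [two_smul, hW w u]

theorem hasFDerivAt_apply_flip (a : E) : HasFDerivAt (fun u => B u a) (B.flip a) u :=
  (B.flip a).hasFDerivAt

theorem dirDeriv_comp_of_hasFDerivAt (hq : ∀ u, HasFDerivAt q (B u) u)
    (hG : DifferentiableAt ℝ G (q u)) (a : E) :
    dirDeriv a (fun u => G (q u)) u = fderiv ℝ G (q u) (B u a) := by
  have h : HasFDerivAt (fun u => G (q u)) _ u := hG.hasFDerivAt.comp u (hq u)
  simp [dirDeriv, h.fderiv]

theorem dirDeriv_comp_of_hasFDerivAt₂ (hq : ∀ u, HasFDerivAt q (B u) u)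
    (hG : DifferentiableAt ℝ (fderiv ℝ G) (q u)) (a b : E) :
    dirDeriv b (fun u => fderiv ℝ G (q u) (B u a)) u =
      fderiv ℝ (fderiv ℝ G) (q u) (B u b) (B u a) + fderiv ℝ G (q u) (B b a) := by
  have h : HasFDerivAt (fun u => fderiv ℝ G (q u) (B u a)) _ u :=
    (hG.hasFDerivAt.comp u (hq u)).clm_apply (hasFDerivAt_apply_flip a)
  simp [dirDeriv, h.fderiv, add_comm]

theorem dirDeriv_comp_of_hasFDerivAt₃ (hq : ∀ u, HasFDerivAt q (B u) u)
    (hG₁ : DifferentiableAt ℝ (fderiv ℝ G) (q u))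
    (hG₂ : DifferentiableAt ℝ (fderiv ℝ (fderiv ℝ G)) (q u)) (a b c : E) :
    dirDeriv c (fun u => fderiv ℝ (fderiv ℝ G) (q u) (B u b) (B u a)
        + fderiv ℝ G (q u) (B b a)) u =
      fderiv ℝ (fderiv ℝ (fderiv ℝ G)) (q u) (B u c) (B u b) (B u a)
        + fderiv ℝ (fderiv ℝ G) (q u) (B c b) (B u a)
        + fderiv ℝ (fderiv ℝ G) (q u) (B u b) (B c a)
        + fderiv ℝ (fderiv ℝ G) (q u) (B u c) (B b a) := by
  have h₁ : HasFDerivAt (fun u => fderiv ℝ (fderiv ℝ G) (q u) (B u b)) _ u :=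
    (hG₂.hasFDerivAt.comp u (hq u)).clm_apply (hasFDerivAt_apply_flip b)
  have h₂ : HasFDerivAt (fun u => fderiv ℝ G (q u) (B b a)) _ u :=
    (hG₁.hasFDerivAt.comp u (hq u)).clm_apply (hasFDerivAt_const _ u)
  simp only [dirDeriv, ((h₁.clm_apply (hasFDerivAt_apply_flip a)).fun_add h₂).fderiv,
    ContinuousLinearMap.flip_add, _root_.add_apply, Function.comp_apply,
    ContinuousLinearMap.comp_zero, zero_add, ContinuousLinearMap.comp_apply,
    ContinuousLinearMap.flip_apply, add_left_inj]
  ring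

theorem dirDeriv_comp_of_hasFDerivAt₄_zero (hq : ∀ u, HasFDerivAt q (B u) u)
    (hG₂ : DifferentiableAt ℝ (fderiv ℝ (fderiv ℝ G)) (q 0))
    (hG₃ : DifferentiableAt ℝ (fderiv ℝ (fderiv ℝ (fderiv ℝ G))) (q 0)) (a b c d : E) :
    dirDeriv d (fun u => fderiv ℝ (fderiv ℝ (fderiv ℝ G)) (q u) (B u c) (B u b) (B u a)
        + fderiv ℝ (fderiv ℝ G) (q u) (B c b) (B u a)
        + fderiv ℝ (fderiv ℝ G) (q u) (B u b) (B c a)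
        + fderiv ℝ (fderiv ℝ G) (q u) (B u c) (B b a)) 0 =
      fderiv ℝ (fderiv ℝ G) (q 0) (B c b) (B d a)
        + fderiv ℝ (fderiv ℝ G) (q 0) (B d b) (B c a)
        + fderiv ℝ (fderiv ℝ G) (q 0) (B d c) (B b a) := by
  have h₃ : HasFDerivAt (fun u => fderiv ℝ (fderiv ℝ (fderiv ℝ G)) (q u) (B u c) (B u b)) _ 0 :=
    ((hG₃.hasFDerivAt.comp 0 (hq 0)).clm_apply (hasFDerivAt_apply_flip c)).clm_apply
      (hasFDerivAt_apply_flip b)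
  have h₂ : HasFDerivAt (fun u => fderiv ℝ (fderiv ℝ G) (q u))
      ((fderiv ℝ (fderiv ℝ (fderiv ℝ G)) (q 0)).comp (B 0)) 0 :=
    HasFDerivAt.comp (g := fderiv ℝ (fderiv ℝ G)) 0 hG₂.hasFDerivAt (hq 0)
  simp [dirDeriv, ((((h₃.clm_apply (hasFDerivAt_apply_flip a)).fun_add
    ((h₂.clm_apply (hasFDerivAt_const (B c b) 0)).clm_apply (hasFDerivAt_apply_flip a))).fun_add
    ((h₂.clm_apply (hasFDerivAt_apply_flip b)).clm_apply (hasFDerivAt_const (B c a) 0))).fun_add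
    ((h₂.clm_apply (hasFDerivAt_apply_flip c)).clm_apply (hasFDerivAt_const (B b a) 0))).fderiv]

theorem eventuallyEq_dirDeriv_comp (hq : ∀ u, HasFDerivAt q (B u) u)
    (hG : ContDiffAt ℝ 4 G (q 0)) (a : E) :
    dirDeriv a (fun u => G (q u)) =ᶠ[𝓝 0] fun u => fderiv ℝ G (q u) (B u a) := by
  filter_upwards [hG.eventually_comp (hq 0).continuousAt] with u hu
  exact dirDeriv_comp_of_hasFDerivAt hq hu.differentiableAt_fderiv_tower.1 a

theorem eventuallyEq_dirDeriv_comp₂ (hq : ∀ u, HasFDerivAt q (B u) u)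
    (hG : ContDiffAt ℝ 4 G (q 0)) (a b : E) :
    dirDeriv b (dirDeriv a (fun u => G (q u))) =ᶠ[𝓝 0]
      fun u => fderiv ℝ (fderiv ℝ G) (q u) (B u b) (B u a) + fderiv ℝ G (q u) (B b a) := by
  filter_upwards [(eventuallyEq_dirDeriv_comp hq hG a).dirDeriv b,
    hG.eventually_comp (hq 0).continuousAt] with u hu hGu
  rw [hu]
  exact dirDeriv_comp_of_hasFDerivAt₂ hq hGu.differentiableAt_fderiv_tower.2.1 a b

theorem eventuallyEq_dirDeriv_comp₃ (hq : ∀ u, HasFDerivAt q (B u) u)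
    (hG : ContDiffAt ℝ 4 G (q 0)) (a b c : E) :
    dirDeriv c (dirDeriv b (dirDeriv a (fun u => G (q u)))) =ᶠ[𝓝 0]
      fun u => fderiv ℝ (fderiv ℝ (fderiv ℝ G)) (q u) (B u c) (B u b) (B u a)
        + fderiv ℝ (fderiv ℝ G) (q u) (B c b) (B u a)
        + fderiv ℝ (fderiv ℝ G) (q u) (B u b) (B c a)
        + fderiv ℝ (fderiv ℝ G) (q u) (B u c) (B b a) := by
  filter_upwards [(eventuallyEq_dirDeriv_comp₂ hq hG a b).dirDeriv c,
    hG.eventually_comp (hq 0).continuousAt] with u hu hGu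
  obtain ⟨-, hG₁, hG₂, -⟩ := hGu.differentiableAt_fderiv_tower
  rw [hu]
  exact dirDeriv_comp_of_hasFDerivAt₃ hq hG₁ hG₂ a b c

theorem dirDeriv_comp_zero (hq : ∀ u, HasFDerivAt q (B u) u)
    (hG : DifferentiableAt ℝ G (q 0)) (a : E) :
    dirDeriv a (fun u => G (q u)) 0 = 0 := by
  simp [dirDeriv_comp_of_hasFDerivAt hq hG]

theorem dirDeriv_comp_zero₂ (hq : ∀ u, HasFDerivAt q (B u) u)
    (hG : ContDiffAt ℝ 4 G (q 0)) (a b : E) :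
    dirDeriv b (dirDeriv a (fun u => G (q u))) 0 = fderiv ℝ G (q 0) (B b a) := by
  simp [(eventuallyEq_dirDeriv_comp₂ hq hG a b).eq_of_nhds]

theorem dirDeriv_comp_zero₃ (hq : ∀ u, HasFDerivAt q (B u) u)
    (hG : ContDiffAt ℝ 4 G (q 0)) (a b c : E) :
    dirDeriv c (dirDeriv b (dirDeriv a (fun u => G (q u)))) 0 = 0 := by
  simp [(eventuallyEq_dirDeriv_comp₃ hq hG a b c).eq_of_nhds]

theorem dirDeriv_comp_zero₄ (hq : ∀ u, HasFDerivAt q (B u) u)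
    (hG : ContDiffAt ℝ 4 G (q 0)) (a b c d : E) :
    dirDeriv d (dirDeriv c (dirDeriv b (dirDeriv a (fun u => G (q u))))) 0 =
      fderiv ℝ (fderiv ℝ G) (q 0) (B c b) (B d a)
        + fderiv ℝ (fderiv ℝ G) (q 0) (B d b) (B c a)
        + fderiv ℝ (fderiv ℝ G) (q 0) (B d c) (B b a) := by
  obtain ⟨-, -, hG₂, hG₃⟩ := hG.differentiableAt_fderiv_tower
  rw [((eventuallyEq_dirDeriv_comp₃ hq hG a b c).dirDeriv d).eq_of_nhds]
  exact dirDeriv_comp_of_hasFDerivAt₄_zero hq hG₂ hG₃ a b c d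

end QuadraticPath

theorem pd_eq_dirDeriv {ι : Type*} [Fintype ι] [DecidableEq ι] (i : ι) (F : (ι → ℝ) → ℝ) :
    pd i F = dirDeriv (Pi.single i 1) F :=
  rfl

section MatrixSmoothness

variable {X n : Type*} [NormedAddCommGroup X] [NormedSpace ℝ X] [Fintype n] [DecidableEq n]
  {k : WithTop ℕ∞} {M : X → Matrix n n ℝ}

theorem contDiff_matrix_det (hM : ∀ i j, ContDiff ℝ k fun x => M x i j) :
    ContDiff ℝ k fun x => (M x).det := by
  simp only [Matrix.det_apply, Units.smul_def, zsmul_eq_mul]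
  exact ContDiff.sum fun σ _ => contDiff_const.mul (contDiff_prod fun i _ => hM (σ i) i)

theorem contDiff_matrix_adjugate_apply (hM : ∀ i j, ContDiff ℝ k fun x => M x i j) (i j : n) :
    ContDiff ℝ k fun x => (M x).adjugate i j := by
  simp only [Matrix.adjugate_apply]
  refine contDiff_matrix_det fun a b => ?_
  by_cases h : a = j
  · simpa only [h, Matrix.updateRow_self] using contDiff_const
  · simpa only [Matrix.updateRow_ne h] using hM a b

theorem contDiffAt_matrix_inv_apply (hM : ∀ i j, ContDiff ℝ k fun x => M x i j) {x : X}
    (hx : (M x).det ≠ 0) (i j : n) : ContDiffAt ℝ k (fun x => (M x)⁻¹ i j) x := by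
  simp only [Matrix.inv_def, Ring.inverse_eq_inv', Matrix.smul_apply, smul_eq_mul]
  exact ((contDiff_matrix_det hM).contDiffAt.inv hx).mul
    (contDiff_matrix_adjugate_apply hM i j).contDiffAt

theorem contDiffAt_normpdf_comp {d : ℕ} (x μ : Fin d → ℝ) {M : X → Matrix (Fin d) (Fin d) ℝ}
    (hM : ∀ i j, ContDiff ℝ k fun y => M y i j) {y : X} (hy : (M y).det ≠ 0) :
    ContDiffAt ℝ k (fun y => normpdf d x μ (M y)) y := by
  have hquad : ContDiffAt ℝ k (fun y => (x - μ) ⬝ᵥ ((M y)⁻¹ *ᵥ (x - μ))) y := by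
    simp only [dotProduct, mulVec]
    exact ContDiffAt.sum fun i _ => contDiffAt_const.mul <| ContDiffAt.sum fun j _ =>
      (contDiffAt_matrix_inv_apply hM hy i j).mul contDiffAt_const
  exact (contDiffAt_const.mul ((contDiff_matrix_det hM).contDiffAt.rpow_const_of_ne hy)).mul
    (Real.contDiff_exp.contDiffAt.comp y (hquad.neg.div_const 2))

end MatrixSmoothness

theorem contDiff_Smat_apply {d : ℕ} {k : WithTop ℕ∞} (i j : Fin d) :
    ContDiff ℝ k fun v => Smat d v i j := by
  by_cases h : i = j
  · simpa [Smat, h] using contDiff_apply ℝ ℝ s(j, j)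
  · simpa [Smat, h] using (contDiff_apply ℝ ℝ s(i, j)).div_const 2

section Wvec

variable {d : ℕ}

@[simp]
theorem wvec_mk (A : Matrix (Fin d) (Fin d) ℝ) (i j : Fin d) :
    wvec d A s(i, j) = if i = j then A i i else A i j + A j i :=
  rfl

variable (d) in
def wvecₗ : Matrix (Fin d) (Fin d) ℝ →ₗ[ℝ] Sym2 (Fin d) → ℝ where
  toFun := wvec d
  map_add' A A' := by
    ext e
    induction e using Sym2.ind with
    | _ i j => simp only [wvec_mk, Matrix.add_apply, Pi.add_apply]; split_ifs <;> ring
  map_smul' c A := by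
    ext e
    induction e using Sym2.ind with
    | _ i j => simp only [wvec_mk, Matrix.smul_apply, Pi.smul_apply, smul_eq_mul,
        RingHom.id_apply]; split_ifs <;> ring

variable (d) in
def wvecBilin : (Fin d → ℝ) →L[ℝ] (Fin d → ℝ) →L[ℝ] Sym2 (Fin d) → ℝ :=
  ((vecMulVecBilin ℝ ℝ).compr₂ (wvecₗ d)).toContinuousBilinearMap

theorem wvecBilin_apply (u w : Fin d → ℝ) : wvecBilin d u w = wvec d (vecMulVec u w) :=
  rfl

theorem wvecBilin_comm (u w : Fin d → ℝ) : wvecBilin d u w = wvecBilin d w u := by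
  ext e
  induction e using Sym2.ind with
  | _ i j => simp only [wvecBilin_apply, wvec_mk, vecMulVec_apply]; split_ifs <;> ring

theorem wvecBilin_single (s t : Fin d) :
    wvecBilin d (Pi.single s 1) (Pi.single t 1) = Pi.single s(s, t) 1 := by
  ext e
  induction e using Sym2.ind with
  | _ i j =>
    simp only [wvecBilin_apply, wvec_mk, vecMulVec_apply, Pi.single_apply, Sym2.eq_iff]
    split_ifs <;> simp_all

theorem hasFDerivAt_add_smul_wvec_vecMulVec_self (v₀ : Sym2 (Fin d) → ℝ) (c : ℝ)
    (u : Fin d → ℝ) :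
    HasFDerivAt (fun u e => v₀ e + c * wvec d (vecMulVec u u) e)
      (((2 * c) • wvecBilin d) u) u := by
  refine (((wvecBilin d).hasFDerivAt_apply_self_of_symm wvecBilin_comm u).const_smul c
    |>.const_add v₀).congr_fderiv ?_
  ext w
  simp only [_root_.smul_apply, Pi.smul_apply, smul_eq_mul]
  ring

end Wvec

theorem normpdfV_deriv_wvec_general
    (d : ℕ) (x μ : Fin d → ℝ) (v₀ : Sym2 (Fin d) → ℝ)
    (hv₀ : (Smat d v₀).PosDef) (ctilde : ℝ) (t1 t2 t3 t4 : Fin d) :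
    (pd t1 (fun u : Fin d → ℝ =>
        normpdfV d x μ (fun e => v₀ e + ctilde * wvec d (vecMulVec u u) e)) 0 = 0)
    ∧ (pd t1 (pd t2 (fun u : Fin d → ℝ =>
        normpdfV d x μ (fun e => v₀ e + ctilde * wvec d (vecMulVec u u) e))) 0 =
        2 * ctilde * pd s(t1, t2) (fun v' => normpdfV d x μ v') v₀)
    ∧ (pd t1 (pd t2 (pd t3 (fun u : Fin d → ℝ =>
        normpdfV d x μ (fun e => v₀ e + ctilde * wvec d (vecMulVec u u) e)))) 0 = 0)
    ∧ (pd t1 (pd t2 (pd t3 (pd t4 (fun u : Fin d → ℝ =>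
        normpdfV d x μ (fun e => v₀ e + ctilde * wvec d (vecMulVec u u) e))))) 0 =
        4 * ctilde ^ 2 *
          (pd s(t1, t4) (pd s(t2, t3) (fun v' => normpdfV d x μ v')) v₀
            + pd s(t1, t3) (pd s(t2, t4) (fun v' => normpdfV d x μ v')) v₀
            + pd s(t1, t2) (pd s(t3, t4) (fun v' => normpdfV d x μ v')) v₀)) := by
  have hq := hasFDerivAt_add_smul_wvec_vecMulVec_self v₀ ctilde
  have hq₀ : (fun e => v₀ e + ctilde * wvec d (vecMulVec 0 0) e) = v₀ := by
    ext e
    rw [← wvecBilin_apply]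
    simp
  have hG : ContDiffAt ℝ 4 (normpdfV d x μ) v₀ :=
    contDiffAt_normpdf_comp x μ contDiff_Smat_apply hv₀.det_pos.ne'
  have hGq : ContDiffAt ℝ 4 (normpdfV d x μ) _ := hq₀ ▸ hG
  have hB (s t : Fin d) : ((2 * ctilde) • wvecBilin d) (Pi.single s 1) (Pi.single t 1) =
      (2 * ctilde) • Pi.single s(s, t) 1 := by
    rw [_root_.smul_apply, _root_.smul_apply, wvecBilin_single]
  simp only [pd_eq_dirDeriv]
  refine ⟨dirDeriv_comp_zero hq (hGq.differentiableAt (by norm_num)) _, ?_,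
    dirDeriv_comp_zero₃ hq hGq _ _ _, ?_⟩
  · rw [dirDeriv_comp_zero₂ hq hGq, hB, hq₀]
    simp [dirDeriv]
  · obtain ⟨-, hG₁, -, -⟩ := hG.differentiableAt_fderiv_tower
    rw [dirDeriv_comp_zero₄ hq hGq, hB, hB, hB, hB, hB, hB, hq₀, dirDeriv_dirDeriv hG₁,
      dirDeriv_dirDeriv hG₁, dirDeriv_dirDeriv hG₁,
      (hG.isSymmSndFDerivAt (by norm_num)) (Pi.single s(t1, t4) 1)]
    simp only [map_smul, _root_.smul_apply, smul_eq_mul]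
    ring

/-- Lemma D.2, display (C.5): derivatives at `u = 0` of
`φ(u) := f_v(x; μ, v₀ + c̃ · w(u uᵀ))`. -/
theorem normpdfV_deriv_wvec
    (d : ℕ) (hd : 1 ≤ d) (x μ : Fin d → ℝ) (v₀ : Sym2 (Fin d) → ℝ)
    (hv₀ : (Smat d v₀).PosDef) (ctilde : ℝ) (t1 t2 t3 t4 : Fin d) :
    (pd t1 (fun u : Fin d → ℝ =>
        normpdfV d x μ (fun e => v₀ e + ctilde * wvec d (vecMulVec u u) e)) 0 = 0)
    ∧ (pd t1 (pd t2 (fun u : Fin d → ℝ =>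
        normpdfV d x μ (fun e => v₀ e + ctilde * wvec d (vecMulVec u u) e))) 0 =
        2 * ctilde * pd s(t1, t2) (fun v' => normpdfV d x μ v') v₀)
    ∧ (pd t1 (pd t2 (pd t3 (fun u : Fin d → ℝ =>
        normpdfV d x μ (fun e => v₀ e + ctilde * wvec d (vecMulVec u u) e)))) 0 = 0)
    ∧ (pd t1 (pd t2 (pd t3 (pd t4 (fun u : Fin d → ℝ =>
        normpdfV d x μ (fun e => v₀ e + ctilde * wvec d (vecMulVec u u) e))))) 0 =
        4 * ctilde ^ 2 *
          (pd s(t1, t4) (pd s(t2, t3) (fun v' => normpdfV d x μ v')) v₀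
            + pd s(t1, t3) (pd s(t2, t4) (fun v' => normpdfV d x μ v')) v₀
            + pd s(t1, t2) (pd s(t3, t4) (fun v' => normpdfV d x μ v')) v₀)) :=
  normpdfV_deriv_wvec_general d x μ v₀ hv₀ ctilde t1 t2 t3 t4

end
end

section
/- Let g(x|z; ψ, α) be the reparameterized two-component heteroscedastic normal mixture density. Then for every α ∈ (0,1), every η = (γ, ν_μ, ν_v) for which S(ν_v) is positive definite, all x ∈ ℝ^d, z ∈ ℝ^p, and every index pair (j,k) with 1 ≤ j ≤ k ≤ d, the first-order partial derivative ∂g/∂λ_{v,jk}, evaluated at λ_μ = 0, λ_v = 0, equals zero. Consequently, for every ℓ ≥ 0, every mixed partial derivative of g of order one in a component of λ_v and order ℓ in components of η vanishes at ψ = ψ* = (η*, 0, 0). -/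
/-!
At `λ_μ = 0` the mixture is `α G(2(1-α) λ_v) + (1-α) G(-2α λ_v)`, where `G(w)` is the normal
density with variance parameter `ν_v + w`. Scaling the `λ_v`-coordinates by `t` multiplies an
iterated partial derivative that differentiates exactly once in `λ_v` by `t`, and points with
`λ_v = 0` are fixed by the scaling. Hence such a derivative of the mixture is
`(α · 2(1-α) + (1-α) · (-2α))` times the corresponding derivative of `G`, which is `0`.
Linearity of iterated partial derivatives needs the smoothness of the normal density where the
covariance matrix is invertible.
-/

open Real Matrix

noncomputable section

/-- Iterated partial derivative along a list of coordinates. -/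
def pdList {ι : Type*} [Fintype ι] [DecidableEq ι] (L : List ι) (F : (ι → ℝ) → ℝ) :
    (ι → ℝ) → ℝ :=
  L.foldr pd F

/-- Normal density with covariate `z` and coefficient matrix `γ` (a `p × d` matrix),
in the `(μ, v)` parameterization: `f_v(x|z; γ, μ, v) := f_v(x; μ + γᵀz, v)`. -/
def normpdfCV (d p : ℕ) (x : Fin d → ℝ) (z : Fin p → ℝ)
    (γ : Matrix (Fin p) (Fin d) ℝ) (μ : Fin d → ℝ) (v : Sym2 (Fin d) → ℝ) : ℝ :=
  normpdfV d x (fun i => μ i + (γᵀ *ᵥ z) i) v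

/-- Reparameterized two-component heteroscedastic normal mixture density, with
`C₁ = −(1+α)/3` and `C₂ = (2−α)/3`. -/
def gmix (d p : ℕ) (x : Fin d → ℝ) (z : Fin p → ℝ) (α : ℝ)
    (γ : Matrix (Fin p) (Fin d) ℝ) (nμ : Fin d → ℝ) (nv : Sym2 (Fin d) → ℝ)
    (lμ : Fin d → ℝ) (lv : Sym2 (Fin d) → ℝ) : ℝ :=
  α * normpdfCV d p x z γ (fun i => nμ i + (1 - α) * lμ i)
      (fun e => nv e + (1 - α) * (2 * lv e + (-(1 + α) / 3) * wvec d (vecMulVec lμ lμ) e))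
  + (1 - α) * normpdfCV d p x z γ (fun i => nμ i - α * lμ i)
      (fun e => nv e - α * (2 * lv e + ((2 - α) / 3) * wvec d (vecMulVec lμ lμ) e))

open scoped ContDiff

namespace GaussianMixture

section PartialDerivatives

variable {ι : Type*}

def scaleCoords (P : ι → Bool) (t : ℝ) : (ι → ℝ) →L[ℝ] (ι → ℝ) :=
  ContinuousLinearMap.pi fun i => (if P i then t else 1) • ContinuousLinearMap.proj i

variable {P : ι → Bool} {t : ℝ}

lemma scaleCoords_apply (θ : ι → ℝ) (i : ι) :
    scaleCoords P t θ i = (if P i then t else 1) * θ i := rfl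

lemma scaleCoords_single [DecidableEq ι] (i : ι) :
    scaleCoords P t (Pi.single i 1) = (if P i then t else 1) • Pi.single i 1 := by
  ext j
  rcases eq_or_ne j i with rfl | h <;> simp [scaleCoords_apply, *]

lemma scaleCoords_eq_self {θ : ι → ℝ} (hθ : ∀ i, P i → θ i = 0) : scaleCoords P t θ = θ := by
  ext i
  by_cases h : P i <;> simp [scaleCoords_apply, h, hθ]

variable [Fintype ι] [DecidableEq ι]

lemma pdList_cons (i : ι) (L : List ι) (F : (ι → ℝ) → ℝ) :
    pdList (i :: L) F = pd i (pdList L F) := rfl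

lemma pd_congr_of_eqOn {U : Set (ι → ℝ)} (hU : IsOpen U) {F H : (ι → ℝ) → ℝ}
    (h : Set.EqOn F H U) {a : ι → ℝ} (ha : a ∈ U) (i : ι) : pd i F a = pd i H a := by
  simp only [pd, (Filter.eventuallyEq_of_mem (hU.mem_nhds ha) h).fderiv_eq]

lemma pd_const_mul (c : ℝ) (F : (ι → ℝ) → ℝ) (i : ι) :
    pd i (fun θ => c * F θ) = fun a => c * pd i F a := by
  ext a
  simp [pd, ← smul_eq_mul, ← Pi.smul_def, fderiv_const_smul_field]

lemma pd_add {F H : (ι → ℝ) → ℝ} {a : ι → ℝ} (hF : DifferentiableAt ℝ F a)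
    (hH : DifferentiableAt ℝ H a) (i : ι) : pd i (F + H) a = pd i F a + pd i H a := by
  simp [pd, fderiv_add hF hH]

lemma pd_comp_scaleCoords {F : (ι → ℝ) → ℝ} {a : ι → ℝ}
    (hF : DifferentiableAt ℝ F (scaleCoords P t a)) (i : ι) :
    pd i (fun θ => F (scaleCoords P t θ)) a
      = (if P i then t else 1) * pd i F (scaleCoords P t a) := by
  have h := fderiv_comp a hF (scaleCoords P t).differentiableAt
  simp only [Function.comp_def] at h
  simp only [pd, h, (scaleCoords P t).fderiv, ContinuousLinearMap.comp_apply, scaleCoords_single,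
    map_smul, smul_eq_mul]

lemma pdList_const_mul (c : ℝ) (F : (ι → ℝ) → ℝ) (L : List ι) (a : ι → ℝ) :
    pdList L (fun θ => c * F θ) a = c * pdList L F a := by
  induction L generalizing a with
  | nil => rfl
  | cons i L ih => rw [pdList_cons, funext ih, pd_const_mul]; rfl

variable {U : Set (ι → ℝ)} {F H : (ι → ℝ) → ℝ}

lemma contDiffOn_pdList (hU : IsOpen U) (hF : ContDiffOn ℝ ∞ F U) (L : List ι) :
    ContDiffOn ℝ ∞ (pdList L F) U := by
  induction L with
  | nil => exact hF
  | cons i L ih =>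
    exact (ContinuousLinearMap.apply ℝ ℝ (Pi.single i 1)).contDiff.comp_contDiffOn
      (ih.fderiv_of_isOpen (m := ∞) hU (by simp))

lemma differentiableAt_pdList (hU : IsOpen U) (hF : ContDiffOn ℝ ∞ F U) (L : List ι)
    {a : ι → ℝ} (ha : a ∈ U) : DifferentiableAt ℝ (pdList L F) a :=
  ((contDiffOn_pdList hU hF L).contDiffAt (hU.mem_nhds ha)).differentiableAt (by simp)

lemma pdList_add (hU : IsOpen U) (hF : ContDiffOn ℝ ∞ F U) (hH : ContDiffOn ℝ ∞ H U)
    (L : List ι) : Set.EqOn (pdList L (F + H)) (pdList L F + pdList L H) U := by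
  induction L with
  | nil => intro a _; rfl
  | cons i L ih =>
    intro a ha
    rw [pdList_cons, pd_congr_of_eqOn hU ih ha,
      pd_add (differentiableAt_pdList hU hF L ha) (differentiableAt_pdList hU hH L ha)]
    rfl

lemma pdList_comp_scaleCoords (hU : IsOpen U) (hF : ContDiffOn ℝ ∞ F U) (L : List ι) :
    Set.EqOn (pdList L fun θ => F (scaleCoords P t θ))
      (fun a => t ^ L.countP P * pdList L F (scaleCoords P t a)) (scaleCoords P t ⁻¹' U) := by
  induction L with
  | nil => intro a _; simp [pdList]
  | cons i L ih =>
    intro a ha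
    rw [pdList_cons, pdList_cons, pd_congr_of_eqOn (hU.preimage (scaleCoords P t).continuous) ih ha,
      pd_const_mul]
    dsimp only
    rw [pd_comp_scaleCoords (differentiableAt_pdList hU hF L ha), List.countP_cons]
    by_cases h : P i <;> simp [h, pow_succ, mul_assoc, mul_left_comm]

theorem pdList_mixture_eq_zero (hU : IsOpen U) {G : (ι → ℝ) → ℝ} (hG : ContDiffOn ℝ ∞ G U)
    {θ₀ : ι → ℝ} (hθ₀U : θ₀ ∈ U) (hθ₀ : ∀ i, P i → θ₀ i = 0) {L : List ι}
    (hL : L.countP P = 1) {a b s₁ s₂ : ℝ} (hab : a * s₁ + b * s₂ = 0) :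
    pdList L (fun θ => a * G (scaleCoords P s₁ θ) + b * G (scaleCoords P s₂ θ)) θ₀ = 0 := by
  have hfix : ∀ r, scaleCoords P r θ₀ = θ₀ := fun r => scaleCoords_eq_self hθ₀
  have hmem : ∀ r, θ₀ ∈ scaleCoords P r ⁻¹' U := fun r => by simpa [hfix r]
  have hopen : ∀ r, IsOpen (scaleCoords P r ⁻¹' U) := fun r =>
    hU.preimage (scaleCoords P r).continuous
  have hsmooth : ∀ r, ContDiffOn ℝ ∞ (fun θ => G (scaleCoords P r θ)) (scaleCoords P r ⁻¹' U) :=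
    fun r => hG.comp (scaleCoords P r).contDiff.contDiffOn fun _ h => h
  have hterm : ∀ c r, pdList L (fun θ => c * G (scaleCoords P r θ)) θ₀ = c * r * pdList L G θ₀ :=
    fun c r => by
      rw [pdList_const_mul, pdList_comp_scaleCoords hU hG L (hmem r)]
      simp only [hL, hfix, pow_one, mul_assoc]
  have hsum := pdList_add ((hopen s₁).inter (hopen s₂))
    (((hsmooth s₁).mono Set.inter_subset_left).const_smul a)
    (((hsmooth s₂).mono Set.inter_subset_right).const_smul b) L ⟨hmem s₁, hmem s₂⟩
  simp only [smul_eq_mul] at hsum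
  rw [show (fun θ => a * G (scaleCoords P s₁ θ) + b * G (scaleCoords P s₂ θ))
      = (fun θ => a * G (scaleCoords P s₁ θ)) + fun θ => b * G (scaleCoords P s₂ θ) from rfl,
    hsum, Pi.add_apply, hterm, hterm]
  linear_combination pdList L G θ₀ * hab

end PartialDerivatives

section Smoothness

variable {E : Type*} [NormedAddCommGroup E] [NormedSpace ℝ E] {k : WithTop ℕ∞}

lemma contDiff_det {n : Type*} [Fintype n] [DecidableEq n] {A : E → Matrix n n ℝ}
    (hA : ∀ i j, ContDiff ℝ k fun θ => A θ i j) : ContDiff ℝ k fun θ => (A θ).det := by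
  simp only [Matrix.det_apply]
  exact ContDiff.sum fun σ _ => (contDiff_prod fun i _ => hA (σ i) i).const_smul _

lemma contDiff_adjugate {n : Type*} [Fintype n] [DecidableEq n] {A : E → Matrix n n ℝ}
    (hA : ∀ i j, ContDiff ℝ k fun θ => A θ i j) (i j : n) :
    ContDiff ℝ k fun θ => (A θ).adjugate i j := by
  simp only [Matrix.adjugate_apply]
  refine contDiff_det fun r c => ?_
  rcases eq_or_ne r j with rfl | h
  · simpa using contDiff_const
  · simpa [Matrix.updateRow_ne h] using hA r c

lemma normpdf_eq_adjugate (d : ℕ) (x μ : Fin d → ℝ) (S : Matrix (Fin d) (Fin d) ℝ) :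
    normpdf d x μ S = (2 * π) ^ (-(d : ℝ) / 2) * S.det ^ (-(1 : ℝ) / 2) *
      Real.exp (-(S.det⁻¹ * ((x - μ) ⬝ᵥ (S.adjugate *ᵥ (x - μ)))) / 2) := by
  rw [normpdf, Matrix.inv_def, Ring.inverse_eq_inv', smul_mulVec, dotProduct_smul, smul_eq_mul]

lemma contDiffOn_normpdf {d : ℕ} (x : Fin d → ℝ) {μ : E → Fin d → ℝ}
    {S : E → Matrix (Fin d) (Fin d) ℝ} (hμ : ∀ i, ContDiff ℝ k fun θ => μ θ i)
    (hS : ∀ i j, ContDiff ℝ k fun θ => S θ i j) :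
    ContDiffOn ℝ k (fun θ => normpdf d x (μ θ) (S θ)) {θ | (S θ).det ≠ 0} := by
  have hdet := contDiff_det hS
  have hquad : ContDiff ℝ k fun θ => (x - μ θ) ⬝ᵥ ((S θ).adjugate *ᵥ (x - μ θ)) := by
    simp only [dotProduct, mulVec, Pi.sub_apply]
    exact ContDiff.sum fun i _ => (contDiff_const.sub (hμ i)).mul
      (ContDiff.sum fun j _ => (contDiff_adjugate hS i j).mul (contDiff_const.sub (hμ j)))
  simp only [normpdf_eq_adjugate]
  intro θ hθ
  exact ((contDiffAt_const.mul ((Real.contDiffAt_rpow_const_of_ne hθ).comp θ hdet.contDiffAt)).mul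
    (Real.contDiff_exp.contDiffAt.comp θ
      (((hdet.contDiffAt.inv hθ).mul hquad.contDiffAt).neg.div_const 2))).contDiffWithinAt

lemma contDiff_Smat_apply {d : ℕ} {v : E → Sym2 (Fin d) → ℝ}
    (hv : ∀ e, ContDiff ℝ k fun θ => v θ e) (i j : Fin d) :
    ContDiff ℝ k fun θ => Smat d (v θ) i j := by
  by_cases h : i = j
  · simpa [Smat, h] using hv s(j, j)
  · simpa [Smat, h] using (hv s(i, j)).div_const 2

lemma isOpen_setOf_det_Smat_ne_zero {d : ℕ} {v : E → Sym2 (Fin d) → ℝ}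
    (hv : ∀ e, ContDiff ℝ k fun θ => v θ e) : IsOpen {θ | (Smat d (v θ)).det ≠ 0} :=
  isOpen_ne_fun (contDiff_det (contDiff_Smat_apply hv)).continuous continuous_const

lemma contDiffOn_normpdfCV {d p : ℕ} (x : Fin d → ℝ) (z : Fin p → ℝ)
    {γ : E → Matrix (Fin p) (Fin d) ℝ} {μ : E → Fin d → ℝ} {v : E → Sym2 (Fin d) → ℝ}
    (hγ : ∀ a b, ContDiff ℝ k fun θ => γ θ a b) (hμ : ∀ i, ContDiff ℝ k fun θ => μ θ i)
    (hv : ∀ e, ContDiff ℝ k fun θ => v θ e) :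
    ContDiffOn ℝ k (fun θ => normpdfCV d p x z (γ θ) (μ θ) (v θ))
      {θ | (Smat d (v θ)).det ≠ 0} := by
  refine contDiffOn_normpdf x (fun i => (hμ i).add ?_) (contDiff_Smat_apply hv)
  simp only [mulVec, dotProduct, transpose_apply]
  exact ContDiff.sum fun q _ => (hγ q i).mul contDiff_const

end Smoothness

lemma wvec_zero (d : ℕ) : wvec d 0 = 0 := by
  ext e
  induction e using Sym2.ind
  simp [wvec]

lemma gmix_lamMu_zero (d p : ℕ) (x : Fin d → ℝ) (z : Fin p → ℝ) (α : ℝ)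
    (γ : Matrix (Fin p) (Fin d) ℝ) (nμ : Fin d → ℝ) (nv lv : Sym2 (Fin d) → ℝ) :
    gmix d p x z α γ nμ nv 0 lv
      = α * normpdfCV d p x z γ nμ (fun e => nv e + 2 * (1 - α) * lv e)
        + (1 - α) * normpdfCV d p x z γ nμ (fun e => nv e + -(2 * α) * lv e) := by
  simp only [gmix, zero_vecMulVec, wvec_zero, Pi.zero_apply, mul_zero, add_zero, sub_zero]
  congr 3 <;> ext e <;> ring

theorem pd_gmix_lamV_eq_zero (d p : ℕ) (x : Fin d → ℝ) (z : Fin p → ℝ) (α : ℝ)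
    (γ : Matrix (Fin p) (Fin d) ℝ) (nμ : Fin d → ℝ) {nv : Sym2 (Fin d) → ℝ}
    (hnv : (Smat d nv).det ≠ 0) (e : Sym2 (Fin d)) :
    pd e (fun lv => gmix d p x z α γ nμ nv 0 lv) 0 = 0 := by
  let G : (Sym2 (Fin d) → ℝ) → ℝ := fun w => normpdfCV d p x z γ nμ (fun e => nv e + w e)
  have hv : ∀ e, ContDiff ℝ ∞ fun w : Sym2 (Fin d) → ℝ => nv e + w e :=
    fun e => contDiff_const.add (contDiff_apply ℝ ℝ e)
  have hmix : (fun lv => gmix d p x z α γ nμ nv 0 lv) = fun lv =>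
      α * G (scaleCoords (fun _ => true) (2 * (1 - α)) lv)
        + (1 - α) * G (scaleCoords (fun _ => true) (-(2 * α)) lv) := by
    funext lv
    simp [gmix_lamMu_zero, G, scaleCoords_apply]
  rw [hmix]
  exact pdList_mixture_eq_zero (P := fun _ => true) (L := [e]) (G := G)
    (isOpen_setOf_det_Smat_ne_zero hv)
    (contDiffOn_normpdfCV x z (fun _ _ => contDiff_const) (fun _ => contDiff_const) hv)
    (by simpa using hnv) (by simp) (by simp) (by ring)

theorem pdList_gmix_eq_zero (d p : ℕ) (x : Fin d → ℝ) (z : Fin p → ℝ) (α : ℝ)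
    (γstar : Matrix (Fin p) (Fin d) ℝ) (μstar : Fin d → ℝ) {vstar : Sym2 (Fin d) → ℝ}
    (hvstar : (Smat d vstar).det ≠ 0)
    {L : List (((Fin p × Fin d) ⊕ (Fin d ⊕ Sym2 (Fin d))) ⊕ Sym2 (Fin d))}
    (hL : L.countP (fun c => c.isRight) = 1) :
    pdList L
      (fun θ => gmix d p x z α
        (Matrix.of fun a b => θ (Sum.inl (Sum.inl (a, b))))
        (fun i => θ (Sum.inl (Sum.inr (Sum.inl i))))
        (fun e => θ (Sum.inl (Sum.inr (Sum.inr e))))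
        0 (fun e => θ (Sum.inr e)))
      (Sum.elim (Sum.elim (fun q => γstar q.1 q.2) (Sum.elim μstar vstar)) 0) = 0 := by
  let G : (((Fin p × Fin d) ⊕ (Fin d ⊕ Sym2 (Fin d))) ⊕ Sym2 (Fin d) → ℝ) → ℝ := fun θ =>
    normpdfCV d p x z (Matrix.of fun a b => θ (Sum.inl (Sum.inl (a, b))))
      (fun i => θ (Sum.inl (Sum.inr (Sum.inl i))))
      (fun e => θ (Sum.inl (Sum.inr (Sum.inr e))) + θ (Sum.inr e))
  have hv : ∀ e, ContDiff ℝ ∞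
      fun θ : ((Fin p × Fin d) ⊕ (Fin d ⊕ Sym2 (Fin d))) ⊕ Sym2 (Fin d) → ℝ =>
        θ (Sum.inl (Sum.inr (Sum.inr e))) + θ (Sum.inr e) :=
    fun e => (contDiff_apply ℝ ℝ _).add (contDiff_apply ℝ ℝ _)
  have hmix : (fun θ => gmix d p x z α
        (Matrix.of fun a b => θ (Sum.inl (Sum.inl (a, b))))
        (fun i => θ (Sum.inl (Sum.inr (Sum.inl i))))
        (fun e => θ (Sum.inl (Sum.inr (Sum.inr e))))
        0 (fun e => θ (Sum.inr e))) = fun θ =>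
      α * G (scaleCoords Sum.isRight (2 * (1 - α)) θ)
        + (1 - α) * G (scaleCoords Sum.isRight (-(2 * α)) θ) := by
    funext θ
    simp [gmix_lamMu_zero, G, scaleCoords_apply]
  rw [hmix]
  exact pdList_mixture_eq_zero (P := Sum.isRight) (G := G) (isOpen_setOf_det_Smat_ne_zero hv)
    (contDiffOn_normpdfCV x z (fun _ _ => contDiff_apply ℝ ℝ _) (fun _ => contDiff_apply ℝ ℝ _) hv)
    (by simpa using hvstar) (by simp) hL (by ring)

end GaussianMixture

theorem gmix_lamV_first_deriv_vanish_general
    (d p : ℕ) (α : ℝ)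
    (γstar : Matrix (Fin p) (Fin d) ℝ) (μstar : Fin d → ℝ)
    (vstar : Sym2 (Fin d) → ℝ) (hvstar : (Smat d vstar).PosDef)
    (x : Fin d → ℝ) (z : Fin p → ℝ) :
    (∀ (γ : Matrix (Fin p) (Fin d) ℝ) (nμ : Fin d → ℝ) (nv : Sym2 (Fin d) → ℝ),
        (Smat d nv).PosDef →
        ∀ j k : Fin d, j ≤ k →
          pd s(j, k) (fun lv => gmix d p x z α γ nμ nv 0 lv) 0 = 0)
    ∧ (∀ L : List (((Fin p × Fin d) ⊕ (Fin d ⊕ Sym2 (Fin d))) ⊕ Sym2 (Fin d)),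
        L.countP (fun c => c.isRight) = 1 →
          pdList L
            (fun θ => gmix d p x z α
              (Matrix.of fun a b => θ (Sum.inl (Sum.inl (a, b))))
              (fun i => θ (Sum.inl (Sum.inr (Sum.inl i))))
              (fun e => θ (Sum.inl (Sum.inr (Sum.inr e))))
              0 (fun e => θ (Sum.inr e)))
            (Sum.elim
              (Sum.elim (fun q => γstar q.1 q.2) (Sum.elim μstar vstar))
              0) = 0) :=
  ⟨fun γ nμ _ hnv j k _ =>
      GaussianMixture.pd_gmix_lamV_eq_zero d p x z α γ nμ hnv.det_pos.ne' s(j, k),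
    fun _ hL => GaussianMixture.pdList_gmix_eq_zero d p x z α γstar μstar hvstar.det_pos.ne' hL⟩

/-- Lemma D.2(c): the first-order partial derivatives of `g` with
respect to the components of `λ_v` vanish at `λ_μ = 0, λ_v = 0` (for every admissible
`η`), and consequently every mixed partial derivative of order one in a component of
`λ_v` and any order `ℓ ≥ 0` in components of `η` vanishes at `ψ = ψ* = (η*, 0, 0)`. -/
theorem gmix_lamV_first_deriv_vanish
    (d p : ℕ) (hd : 1 ≤ d) (α : ℝ) (hα : α ∈ Set.Ioo (0 : ℝ) 1)
    (γstar : Matrix (Fin p) (Fin d) ℝ) (μstar : Fin d → ℝ)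
    (vstar : Sym2 (Fin d) → ℝ) (hvstar : (Smat d vstar).PosDef)
    (x : Fin d → ℝ) (z : Fin p → ℝ) :
    (∀ (γ : Matrix (Fin p) (Fin d) ℝ) (nμ : Fin d → ℝ) (nv : Sym2 (Fin d) → ℝ),
        (Smat d nv).PosDef →
        ∀ j k : Fin d, j ≤ k →
          pd s(j, k) (fun lv => gmix d p x z α γ nμ nv 0 lv) 0 = 0)
    ∧ (∀ L : List (((Fin p × Fin d) ⊕ (Fin d ⊕ Sym2 (Fin d))) ⊕ Sym2 (Fin d)),
        L.countP (fun c => c.isRight) = 1 →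
          pdList L
            (fun θ => gmix d p x z α
              (Matrix.of fun a b => θ (Sum.inl (Sum.inl (a, b))))
              (fun i => θ (Sum.inl (Sum.inr (Sum.inl i))))
              (fun e => θ (Sum.inl (Sum.inr (Sum.inr e))))
              0 (fun e => θ (Sum.inr e)))
            (Sum.elim
              (Sum.elim (fun q => γstar q.1 q.2) (Sum.elim μstar vstar))
              0) = 0) :=
  gmix_lamV_first_deriv_vanish_general d p α γstar μstar vstar hvstar x z

end
end
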